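/- arXiv:1910.14354 — 2 statements merged into one kernel-verified Lean document; each statement's English description precedes it below -/
import Mathlib

section
/- Let k be a symmetric positive-semidefinite kernel on a type ι and σ > 0 a noise level. For any n, any observation points x : Fin n → ι, any new observation point w : ι, and any z : ι, the Gaussian-process posterior variance is nonnegative, bounded by the prior variance, and nonincreasing in the observations: 0 ≤ σ²(z; x⁺) ≤ σ²(z; x) ≤ k z z, where x⁺ = Fin.snoc x w is x with w appended. -/
open Matrix

/-- The Gaussian-process posterior covariance `k(z, z'; x)` given observation
points `x : Fin n → ι` and noise level `σ`. -/
noncomputable def postCov {ι : Type*} (k : ι → ι → ℝ) (σ : ℝ) {n : ℕ}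
    (x : Fin n → ι) (z z' : ι) : ℝ :=
  k z z' -
    dotProduct (fun i => k (x i) z)
      (Matrix.mulVec
        ((Matrix.of (fun i j => k (x i) (x j)) + σ ^ 2 • (1 : Matrix (Fin n) (Fin n) ℝ))⁻¹)
        (fun i => k (x i) z'))

/-- The Gaussian-process posterior variance `σ²(z; x) = k(z, z; x)`. -/
noncomputable def postVar {ι : Type*} (k : ι → ι → ℝ) (σ : ℝ) {n : ℕ}
    (x : Fin n → ι) (z : ι) : ℝ :=
  postCov k σ x z z

/-!
For positive definite `A`, `bᵀA⁻¹b = max_v (2 vᵀb - vᵀA v)`, the maximum being attained at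
`v = A⁻¹b`. Apply this to `A = K_x + σ²I` and `b = k_x(z)`, so that `σ²(z; x) = k z z - bᵀA⁻¹b`.
The competitor `v = 0` gives `σ²(z; x) ≤ k z z`. The maximiser for `x`, padded with a zero
coordinate, is a competitor for `x⁺` with the same value, which gives monotonicity. Finally,
positive semidefiniteness of the kernel matrix of `(x, z)` at `(-v, 1)` gives
`2 vᵀb - vᵀK_x v ≤ k z z`, and `vᵀK_x v ≤ vᵀA v`, which gives nonnegativity.
-/

namespace Matrix

lemma PosSemidef.posDef_add_smul_one {N : Type*} [DecidableEq N] {K : Matrix N N ℝ}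
    (hK : K.PosSemidef) {c : ℝ} (hc : 0 < c) : (K + c • (1 : Matrix N N ℝ)).PosDef :=
  PosDef.posSemidef_add hK (PosDef.one.smul hc)

lemma PosDef.isGreatest_two_mul_dotProduct_sub {N : Type*} [Fintype N] [DecidableEq N]
    {A : Matrix N N ℝ} (hA : A.PosDef) (b : N → ℝ) :
    IsGreatest (Set.range fun v => 2 * v ⬝ᵥ b - v ⬝ᵥ A *ᵥ v) (b ⬝ᵥ A⁻¹ *ᵥ b) := by
  set u := A⁻¹ *ᵥ b
  have hAu : A *ᵥ u = b := by
    rw [mulVec_mulVec, mul_nonsing_inv _ hA.det_pos.ne'.isUnit, one_mulVec]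
  have hAT : Aᵀ = A := by simpa using hA.isHermitian.eq
  refine ⟨⟨u, by dsimp only; rw [hAu, dotProduct_comm]; ring⟩, ?_⟩
  rintro _ ⟨v, rfl⟩
  have hsymm : u ⬝ᵥ A *ᵥ v = v ⬝ᵥ b := by
    rw [dotProduct_mulVec, ← mulVec_transpose, hAT, hAu, dotProduct_comm]
  have hexpand : (v - u) ⬝ᵥ A *ᵥ (v - u) = v ⬝ᵥ A *ᵥ v - 2 * v ⬝ᵥ b + u ⬝ᵥ b := by
    rw [mulVec_sub, hAu, sub_dotProduct, dotProduct_sub, dotProduct_sub, hsymm]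
    ring
  have hnonneg : 0 ≤ (v - u) ⬝ᵥ A *ᵥ (v - u) := by
    simpa using hA.posSemidef.dotProduct_mulVec_nonneg (v - u)
  rw [dotProduct_comm b u]
  linarith

lemma snoc_dotProduct_mulVec_snoc {R : Type*} [CommRing R] {n : ℕ}
    (M : Matrix (Fin (n + 1)) (Fin (n + 1)) R) (v : Fin n → R) (c : R) :
    (Fin.snoc v c : Fin (n + 1) → R) ⬝ᵥ M *ᵥ Fin.snoc v c =
      v ⬝ᵥ M.submatrix Fin.castSucc Fin.castSucc *ᵥ v
        + c * (v ⬝ᵥ fun i => M i.castSucc (Fin.last n))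
        + c * ((fun j => M (Fin.last n) j.castSucc) ⬝ᵥ v)
        + c * c * M (Fin.last n) (Fin.last n) := by
  simp only [dotProduct, mulVec, Fin.sum_univ_castSucc, Fin.snoc_castSucc, Fin.snoc_last,
    submatrix_apply, mul_add, Finset.sum_add_distrib, Finset.mul_sum]
  ring_nf

lemma PosSemidef.two_mul_dotProduct_sub_le {n : ℕ} {M : Matrix (Fin (n + 1)) (Fin (n + 1)) ℝ}
    (hM : M.PosSemidef) (u : Fin n → ℝ) :
    2 * (u ⬝ᵥ fun i => M i.castSucc (Fin.last n))
      - u ⬝ᵥ M.submatrix Fin.castSucc Fin.castSucc *ᵥ u ≤ M (Fin.last n) (Fin.last n) := by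
  have hrow :
      (fun j : Fin n => M (Fin.last n) j.castSucc) = fun i => M i.castSucc (Fin.last n) :=
    funext fun j => by simpa using (hM.isHermitian.apply (Fin.last n) j.castSucc).symm
  have h := hM.dotProduct_mulVec_nonneg (Fin.snoc (-u) 1)
  rw [star_trivial, snoc_dotProduct_mulVec_snoc, hrow, dotProduct_comm _ (-u)] at h
  simp only [neg_dotProduct, dotProduct_neg, mulVec_neg] at h
  linarith

end Matrix

abbrev kernelMatrix {ι R : Type*} {n : ℕ} (k : ι → ι → R) (x : Fin n → ι) :
    Matrix (Fin n) (Fin n) R :=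
  of fun i j => k (x i) (x j)

lemma kernelMatrix_snoc_submatrix_castSucc {ι R : Type*} {n : ℕ} (k : ι → ι → R)
    (x : Fin n → ι) (w : ι) :
    (kernelMatrix k (Fin.snoc x w : Fin (n + 1) → ι)).submatrix Fin.castSucc Fin.castSucc =
      kernelMatrix k x := by
  ext; simp

section GaussianProcess

variable {ι : Type*} {k : ι → ι → ℝ} {σ : ℝ} {n : ℕ}

lemma postVar_le_self {x : Fin n → ι} (hK : (kernelMatrix k x).PosSemidef)
    (hσ : σ ≠ 0) (z : ι) : postVar k σ x z ≤ k z z := by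
  have hA := hK.posDef_add_smul_one (pow_two_pos_of_ne_zero hσ)
  have h := (hA.isGreatest_two_mul_dotProduct_sub fun i => k (x i) z).2 ⟨0, rfl⟩
  simp only [zero_dotProduct, mul_zero, sub_zero] at h
  exact sub_le_self _ h

lemma postVar_nonneg {x : Fin n → ι} {z : ι}
    (hK : (kernelMatrix k (Fin.snoc x z : Fin (n + 1) → ι)).PosSemidef)
    (hσ : σ ≠ 0) : 0 ≤ postVar k σ x z := by
  have hKx := hK.submatrix Fin.castSucc
  rw [kernelMatrix_snoc_submatrix_castSucc] at hKx
  have hA := hKx.posDef_add_smul_one (pow_two_pos_of_ne_zero hσ)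
  obtain ⟨u, hu⟩ := (hA.isGreatest_two_mul_dotProduct_sub fun i => k (x i) z).1
  have hschur := hK.two_mul_dotProduct_sub_le u
  simp only [kernelMatrix_snoc_submatrix_castSucc, of_apply, Fin.snoc_castSucc,
    Fin.snoc_last] at hschur
  have hnoise : 0 ≤ σ ^ 2 * (u ⬝ᵥ u) := mul_nonneg (sq_nonneg σ) (dotProduct_self_star_nonneg u)
  simp only [add_mulVec, dotProduct_add, smul_mulVec, one_mulVec, dotProduct_smul,
    smul_eq_mul] at hu
  unfold postVar postCov
  linarith

lemma postVar_snoc_le {x : Fin n → ι} {w : ι}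
    (hK : (kernelMatrix k (Fin.snoc x w : Fin (n + 1) → ι)).PosSemidef)
    (hσ : σ ≠ 0) (z : ι) : postVar k σ (Fin.snoc x w) z ≤ postVar k σ x z := by
  have hKx := hK.submatrix Fin.castSucc
  rw [kernelMatrix_snoc_submatrix_castSucc] at hKx
  have hA := hKx.posDef_add_smul_one (pow_two_pos_of_ne_zero hσ)
  obtain ⟨u, hu⟩ := (hA.isGreatest_two_mul_dotProduct_sub fun i => k (x i) z).1
  have hAw := hK.posDef_add_smul_one (pow_two_pos_of_ne_zero hσ)
  have h := (hAw.isGreatest_two_mul_dotProduct_sub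
    fun i => k ((Fin.snoc x w : Fin (n + 1) → ι) i) z).2 ⟨Fin.snoc u 0, rfl⟩
  have hsub : (kernelMatrix k (Fin.snoc x w : Fin (n + 1) → ι) + σ ^ 2 • 1).submatrix
      Fin.castSucc Fin.castSucc = kernelMatrix k x + σ ^ 2 • 1 := by
    ext i j; simp [one_apply]
  have hdot : (Fin.snoc u 0 : Fin (n + 1) → ℝ) ⬝ᵥ
      (fun i => k ((Fin.snoc x w : Fin (n + 1) → ι) i) z) = u ⬝ᵥ fun i => k (x i) z := by
    simp [dotProduct, Fin.sum_univ_castSucc]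
  beta_reduce at h
  rw [snoc_dotProduct_mulVec_snoc, hsub, hdot] at h
  simp only [zero_mul, add_zero] at h
  unfold postVar postCov
  linarith

end GaussianProcess

theorem posterior_variance_monotone_general
    {ι : Type*} (k : ι → ι → ℝ) (σ : ℝ)
    (hσ : 0 < σ)
    (hpsd : ∀ (n : ℕ) (x : Fin n → ι),
      (Matrix.of (fun i j => k (x i) (x j)) : Matrix (Fin n) (Fin n) ℝ).PosSemidef)
    (n : ℕ) (x : Fin n → ι) (w : ι) (z : ι) :
    0 ≤ postVar k σ (Fin.snoc x w) z ∧
      postVar k σ (Fin.snoc x w) z ≤ postVar k σ x z ∧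
      postVar k σ x z ≤ k z z :=
  ⟨postVar_nonneg (hpsd _ _) hσ.ne', postVar_snoc_le (hpsd _ _) hσ.ne' z,
    postVar_le_self (hpsd _ _) hσ.ne' z⟩

theorem posterior_variance_monotone
    {ι : Type*} (k : ι → ι → ℝ) (σ : ℝ)
    (hσ : 0 < σ)
    (hsymm : ∀ z z', k z z' = k z' z)
    (hpsd : ∀ (n : ℕ) (x : Fin n → ι),
      (Matrix.of (fun i j => k (x i) (x j)) : Matrix (Fin n) (Fin n) ℝ).PosSemidef)
    (n : ℕ) (x : Fin n → ι) (w : ι) (z : ι) :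
    0 ≤ postVar k σ (Fin.snoc x w) z ∧
      postVar k σ (Fin.snoc x w) z ≤ postVar k σ x z ∧
      postVar k σ x z ≤ k z z :=
  posterior_variance_monotone_general k σ hσ hpsd n x w z
end

section
/- Let k be a symmetric positive-semidefinite kernel on a type ι and σ > 0 a noise level. For any n, any observation points x : Fin n → ι, and any two points z₁, z₂ : ι, the Gaussian-process posterior covariance satisfies the Cauchy–Schwarz bound k(z₁, z₂; x)² ≤ σ²(z₁; x) · σ²(z₂; x). -/
open Matrix

/-!
For test points `z : Fin m → ι`, the posterior covariance matrix `(k(z a, z b; x))` is the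
Schur complement of `K_x + σ² I` in the Gram matrix of `k` at the points `x, z`, with `σ² I`
added to its `x`-block. That block matrix is positive semidefinite and `K_x + σ² I` is positive
definite, so the Schur complement is positive semidefinite; for `m = 2` its determinant is
nonnegative, which is the claimed inequality.
-/

namespace Matrix

theorem PosSemidef.apply_sq_le_mul_apply {p : Type*} [Fintype p] {S : Matrix p p ℝ}
    (hS : S.PosSemidef) (i j : p) : S i j ^ 2 ≤ S i i * S j j := by
  classical
  have hdet := (hS.submatrix ![i, j]).det_nonneg
  have hsymm : S j i = S i j := hS.isHermitian.apply i j
  simp only [det_fin_two, submatrix_apply, Matrix.cons_val_zero, Matrix.cons_val_one,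
    hsymm] at hdet
  nlinarith

theorem PosSemidef.fromBlocks_add₁₁ {R m p : Type*} [CommRing R] [PartialOrder R] [StarRing R]
    [StarOrderedRing R] [Fintype m] [Fintype p]
    {A P : Matrix m m R} {B : Matrix m p R} {C : Matrix p m R} {D : Matrix p p R}
    (h : (fromBlocks A B C D).PosSemidef) (hP : P.PosSemidef) :
    (fromBlocks (A + P) B C D).PosSemidef := by
  classical
  have hP' : (fromBlocks P 0 0 0 : Matrix (m ⊕ p) (m ⊕ p) R).PosSemidef := by
    convert hP.conjTranspose_mul_mul_same (fromCols (1 : Matrix m m R) (0 : Matrix m p R))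
    rw [conjTranspose_fromCols_eq_fromRows_conjTranspose, fromRows_mul, fromRows_mul_fromCols]
    simp
  simpa [fromBlocks_add] using h.add hP'

theorem conjTranspose_mul_mul_apply {R m p : Type*} [CommSemiring R] [StarRing R] [TrivialStar R]
    [Fintype m] (B : Matrix m p R) (M : Matrix m m R) (a b : p) :
    (Bᴴ * M * B) a b = (fun i => B i a) ⬝ᵥ (M *ᵥ fun i => B i b) := by
  rw [Matrix.mul_assoc]
  simp only [mul_apply, conjTranspose_apply, star_trivial, dotProduct, mulVec]

end Matrix

section Kernel

variable {ι : Type*} {k : ι → ι → ℝ}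

theorem posSemidef_gram_of_forall_fin
    (hpsd : ∀ (n : ℕ) (x : Fin n → ι),
      (Matrix.of (fun i j => k (x i) (x j)) : Matrix (Fin n) (Fin n) ℝ).PosSemidef)
    {p : Type*} [Fintype p] (y : p → ι) :
    (Matrix.of fun i j => k (y i) (y j)).PosSemidef := by
  let e := Fintype.equivFin p
  convert (hpsd _ (y ∘ e.symm)).submatrix e using 1
  ext i j
  simp

theorem gram_sum_elim {n m : ℕ} (x : Fin n → ι) (z : Fin m → ι) :
    (Matrix.of fun i j => k (Sum.elim x z i) (Sum.elim x z j)) =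
      fromBlocks (Matrix.of fun i j => k (x i) (x j)) (Matrix.of fun i a => k (x i) (z a))
        (Matrix.of fun a i => k (z a) (x i)) (Matrix.of fun a b => k (z a) (z b)) := by
  ext (i | i) (j | j) <;> rfl

theorem posSemidef_postCov {σ : ℝ} (hσ : σ ≠ 0)
    (hpsd : ∀ (n : ℕ) (x : Fin n → ι),
      (Matrix.of (fun i j => k (x i) (x j)) : Matrix (Fin n) (Fin n) ℝ).PosSemidef)
    {n m : ℕ} (x : Fin n → ι) (z : Fin m → ι) :
    (Matrix.of fun a b => postCov k σ x (z a) (z b)).PosSemidef := by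
  set K : Matrix (Fin n) (Fin n) ℝ := Matrix.of fun i j => k (x i) (x j)
  set B : Matrix (Fin n) (Fin m) ℝ := Matrix.of fun i a => k (x i) (z a)
  set D : Matrix (Fin m) (Fin m) ℝ := Matrix.of fun a b => k (z a) (z b)
  have hnoise : (σ ^ 2 • (1 : Matrix (Fin n) (Fin n) ℝ)).PosDef :=
    PosDef.one.smul (by positivity)
  have hM : (K + σ ^ 2 • 1).PosDef := PosDef.posSemidef_add (hpsd n x) hnoise
  have := hM.isUnit.invertible
  have hblock : (fromBlocks (K + σ ^ 2 • 1) B Bᴴ D).PosSemidef := by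
    have hgram := posSemidef_gram_of_forall_fin hpsd (Sum.elim x z)
    rw [gram_sum_elim] at hgram
    obtain ⟨-, hBC, -, -⟩ := isHermitian_fromBlocks_iff.mp hgram.isHermitian
    rw [← hBC] at hgram
    exact hgram.fromBlocks_add₁₁ hnoise.posSemidef
  have hschur : (Matrix.of fun a b => postCov k σ x (z a) (z b)) =
      D - Bᴴ * (K + σ ^ 2 • 1)⁻¹ * B := by
    ext a b
    rw [Matrix.sub_apply, conjTranspose_mul_mul_apply]
    rfl
  rw [hschur]
  exact (PosDef.fromBlocks₁₁ B D hM).mp hblock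

end Kernel

theorem posterior_covariance_cauchy_schwarz_general
    {ι : Type*} (k : ι → ι → ℝ) (σ : ℝ)
    (hσ : 0 < σ)
    (hpsd : ∀ (n : ℕ) (x : Fin n → ι),
      (Matrix.of (fun i j => k (x i) (x j)) : Matrix (Fin n) (Fin n) ℝ).PosSemidef)
    (n : ℕ) (x : Fin n → ι) (z₁ z₂ : ι) :
    (postCov k σ x z₁ z₂) ^ 2 ≤ postVar k σ x z₁ * postVar k σ x z₂ := by
  simpa [postVar] using
    (posSemidef_postCov hσ.ne' hpsd x ![z₁, z₂]).apply_sq_le_mul_apply 0 1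

theorem posterior_covariance_cauchy_schwarz
    {ι : Type*} (k : ι → ι → ℝ) (σ : ℝ)
    (hσ : 0 < σ)
    (hsymm : ∀ z z', k z z' = k z' z)
    (hpsd : ∀ (n : ℕ) (x : Fin n → ι),
      (Matrix.of (fun i j => k (x i) (x j)) : Matrix (Fin n) (Fin n) ℝ).PosSemidef)
    (n : ℕ) (x : Fin n → ι) (z₁ z₂ : ι) :
    (postCov k σ x z₁ z₂) ^ 2 ≤ postVar k σ x z₁ * postVar k σ x z₂ :=
  posterior_covariance_cauchy_schwarz_general k σ hσ hpsd n x z₁ z₂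
end
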